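/- arXiv:2208.12024 — 2 statements merged into one kernel-verified Lean document; each statement's English description precedes it below -/
import Mathlib

section
/- With A, q, δ, δ' as above (column sums of A at most 1, each A_j q > 0, δ > 0, GIS update δ'_i = δ_i Π_j (A_j q/A_j δ)^{a_{ji}}), the specialization z = q yields D(q, δ') ≤ D(q, δ) − D(Aq, Aδ), where on the right D(Aq, Aδ) = Σ_j A_j q · log(A_j q / A_j δ) − (Σ_j A_j q − Σ_j A_j δ) is the Bregman divergence between the vectors Aq and Aδ in ℝ^J. -/
/-!
Write `r j = (A q)_j / (A δ)_j`, so that `δ'_i = δ_i ∏_j r_j ^ A_ji`. Taking logarithms,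
`∑ q log (q / δ')` is `∑ q log (q / δ)` minus `∑_j (A q)_j log r_j`, which is the entropy part of
`D(Aq, Aδ)`. For the mass part, weighted AM–GM (the column sums of `A` are at most one) bounds
`∏_j r_j ^ A_ji` by `1 + ∑_j A_ji (r_j - 1)`, hence `∑ δ' ≤ ∑ δ + ∑ A q - ∑ A δ`.
-/

open Finset Real

/-- Weighted AM–GM, with the missing weight `1 - ∑ w` placed on the value `1`. -/
theorem prod_rpow_le_one_add_sum_mul_sub_one {κ : Type*} [Fintype κ] (w z : κ → ℝ)
    (hw : ∀ j, 0 ≤ w j) (hw1 : ∑ j, w j ≤ 1) (hz : ∀ j, 0 ≤ z j) :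
    ∏ j, z j ^ w j ≤ 1 + ∑ j, w j * (z j - 1) := by
  have amgm := geom_mean_le_arith_mean_weighted (univ : Finset (Option κ))
    (fun o => o.elim (1 - ∑ j, w j) w) (fun o => o.elim 1 z)
    (fun o _ => by cases o with
      | none => simpa using hw1
      | some j => exact hw j)
    (by simp [Fintype.sum_option])
    (fun o _ => by cases o with
      | none => exact zero_le_one
      | some j => exact hz j)
  simp only [Fintype.prod_option, Fintype.sum_option, Option.elim, one_rpow, one_mul] at amgm
  calc ∏ j, z j ^ w j ≤ (1 - ∑ j, w j) * 1 + ∑ j, w j * z j := amgm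
    _ = 1 + ∑ j, w j * (z j - 1) := by simp only [mul_sub, mul_one, sum_sub_distrib]; ring

theorem sum_mul_pos_of_sum_mul_ne_zero {ι : Type*} [Fintype ι] {a q δ : ι → ℝ}
    (ha : ∀ i, 0 ≤ a i) (hδ : ∀ i, 0 < δ i) (haq : ∑ i, a i * q i ≠ 0) :
    0 < ∑ i, a i * δ i := by
  obtain ⟨i, -, hi⟩ := exists_ne_zero_of_sum_ne_zero haq
  have hai : 0 < a i := (ha i).lt_of_ne (left_ne_zero_of_mul hi).symm
  calc 0 < a i * δ i := mul_pos hai (hδ i)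
    _ ≤ ∑ i, a i * δ i :=
      single_le_sum (fun k _ => mul_nonneg (ha k) (hδ k).le) (mem_univ i)

section MultiplicativeUpdate

variable {ι κ : Type*} [Fintype ι] [Fintype κ] (A : κ → ι → ℝ)

theorem sum_mul_log_div_mul_prod_rpow {q δ : ι → ℝ} {r : κ → ℝ} (hq : ∀ i, q i ≠ 0)
    (hδ : ∀ i, 0 < δ i) (hr : ∀ j, 0 < r j) :
    ∑ i, q i * log (q i / (δ i * ∏ j, r j ^ A j i)) =
      ∑ i, q i * log (q i / δ i) - ∑ j, (∑ i, A j i * q i) * log (r j) := by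
  have hlog : ∀ i, log (q i / (δ i * ∏ j, r j ^ A j i)) =
      log (q i / δ i) - ∑ j, A j i * log (r j) := by
    intro i
    have hprod : ∀ j ∈ univ, r j ^ A j i ≠ 0 := fun j _ => (rpow_pos_of_pos (hr j) _).ne'
    rw [← div_div, log_div (div_ne_zero (hq i) (hδ i).ne') (prod_ne_zero_iff.mpr hprod),
      log_prod hprod]
    simp only [log_rpow (hr _)]
  simp only [hlog, mul_sub, sum_sub_distrib, mul_sum, sum_mul]
  rw [sum_comm]
  simp only [mul_left_comm, mul_assoc]

theorem sum_mul_prod_rpow_le (hA : ∀ j i, 0 ≤ A j i) (hcol : ∀ i, ∑ j, A j i ≤ 1)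
    {δ : ι → ℝ} (hδ : ∀ i, 0 ≤ δ i) {r : κ → ℝ} (hr : ∀ j, 0 ≤ r j) :
    ∑ i, δ i * ∏ j, r j ^ A j i ≤ ∑ i, δ i + ∑ j, (∑ i, A j i * δ i) * (r j - 1) :=
  calc ∑ i, δ i * ∏ j, r j ^ A j i ≤ ∑ i, δ i * (1 + ∑ j, A j i * (r j - 1)) :=
        sum_le_sum fun i _ => mul_le_mul_of_nonneg_left
          (prod_rpow_le_one_add_sum_mul_sub_one _ r (hA · i) (hcol i) hr) (hδ i)
    _ = ∑ i, δ i + ∑ j, (∑ i, A j i * δ i) * (r j - 1) := by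
        simp only [mul_add, mul_one, sum_add_distrib, mul_sum, sum_mul]
        rw [sum_comm]
        simp only [mul_assoc, mul_left_comm]

end MultiplicativeUpdate

/-- Specializing `z = q` in the GIS step inequality yields
`D(q, δ') ≤ D(q, δ) − D(Aq, Aδ)`, where the right-hand Bregman divergence is
between the vectors `Aq` and `Aδ` in `ℝ^J`. -/
theorem gis_step_bregman_decrease (J I : ℕ) (A : Fin J → Fin I → ℝ)
    (hA : ∀ j i, 0 ≤ A j i) (hcol : ∀ i, (∑ j, A j i) ≤ 1)
    (q : Fin I → ℝ) (hq : ∀ i, 0 < q i)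
    (hAq : ∀ j, 0 < ∑ i, A j i * q i)
    (δ : Fin I → ℝ) (hδ : ∀ i, 0 < δ i)
    (δ' : Fin I → ℝ)
    (hδ' : ∀ i, δ' i =
      δ i * ∏ j, ((∑ i', A j i' * q i') / (∑ i', A j i' * δ i')) ^ (A j i)) :
    (∑ i, q i * Real.log (q i / δ' i)) - ((∑ i, q i) - (∑ i, δ' i)) ≤
      ((∑ i, q i * Real.log (q i / δ i)) - ((∑ i, q i) - (∑ i, δ i)))
      - ((∑ j, (∑ i, A j i * q i) *
            Real.log ((∑ i, A j i * q i) / (∑ i, A j i * δ i)))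
         - ((∑ j, ∑ i, A j i * q i) - (∑ j, ∑ i, A j i * δ i))) := by
  have hAδ : ∀ j, 0 < ∑ i, A j i * δ i :=
    fun j => sum_mul_pos_of_sum_mul_ne_zero (hA j) hδ (hAq j).ne'
  set r : Fin J → ℝ := fun j => (∑ i, A j i * q i) / (∑ i, A j i * δ i)
  have hr : ∀ j, 0 < r j := fun j => div_pos (hAq j) (hAδ j)
  obtain rfl : δ' = fun i => δ i * ∏ j, r j ^ A j i := funext hδ'
  have hmass : ∑ j, (∑ i, A j i * δ i) * (r j - 1) =
      ∑ j, ∑ i, A j i * q i - ∑ j, ∑ i, A j i * δ i := by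
    rw [← sum_sub_distrib]
    refine sum_congr rfl fun j _ => ?_
    rw [mul_sub, mul_one, mul_div_cancel₀ _ (hAδ j).ne']
  have hδ'_mass := sum_mul_prod_rpow_le A hA hcol (fun i => (hδ i).le) (fun j => (hr j).le)
  rw [sum_mul_log_div_mul_prod_rpow A (fun i => (hq i).ne') hδ hr]
  linarith
end

section
/- Let A be a J×I nonnegative matrix with all column sums ≤ 1 and q ∈ ℝ^I_{>0}, and suppose the GIS(1) iterates δ^{(n)} (defined by δ^{(0)}=1, δ^{(n+1)}_i = δ^{(n)}_i Π_j (A_j q/A_j δ^{(n)})^{a_{ji}}) all satisfy A_j δ^{(n)} > 0. Then D(A q, A δ^{(n)}) → 0 as n → ∞, where D is the Bregman divergence in ℝ^J. -/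
open Finset Real Filter

/-!
`D(q, ·)` is a Lyapunov function for GIS. Taking logarithms of the update `δ ↦ δ'` gives
`∑ qᵢ log (qᵢ/δᵢ) - ∑ qᵢ log (qᵢ/δ'ᵢ) = ∑ⱼ (Aq)ⱼ log ((Aq)ⱼ/(Aδ)ⱼ)`, and weighted AM–GM with the
weights `aⱼᵢ` together with `1 - ∑ⱼ aⱼᵢ` (on the value `1`) gives
`∑ δ' ≤ ∑ Aq + ∑ δ - ∑ Aδ`. Adding up, `D(Aq, Aδ) ≤ D(q, δ) - D(q, δ')`. So `D(q, δ⁽ⁿ⁾)` is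
nonincreasing and nonnegative, hence convergent, and its successive differences, which dominate
`D(Aq, Aδ⁽ⁿ⁾) ≥ 0`, tend to `0`.
-/

lemma mul_log_div_sub_sub_nonneg {s t : ℝ} (hs : 0 ≤ s) (ht : 0 < t) :
    0 ≤ s * log (s / t) - (s - t) := by
  have hkl : t * InformationTheory.klFun (s / t) = s * log (s / t) - (s - t) := by
    rw [InformationTheory.klFun_apply]
    field_simp
    ring
  exact hkl ▸ mul_nonneg ht.le (InformationTheory.klFun_nonneg (div_nonneg hs ht.le))

theorem Real.geom_mean_le_arith_mean_weighted_of_sum_le_one {ι : Type*} [Fintype ι]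
    (w z : ι → ℝ) (hw : ∀ i, 0 ≤ w i) (hw₁ : ∑ i, w i ≤ 1) (hz : ∀ i, 0 ≤ z i) :
    ∏ i, z i ^ w i ≤ ∑ i, w i * z i + (1 - ∑ i, w i) := by
  have h := geom_mean_le_arith_mean_weighted (univ : Finset (Option ι))
    (fun o => o.elim (1 - ∑ i, w i) w) (fun o => o.elim 1 z)
    (by rintro (_ | i) _ <;> simp [hw, hw₁])
    (by simp [Fintype.sum_option])
    (by rintro (_ | i) _ <;> simp [hz])
  simpa [Fintype.prod_option, Fintype.sum_option, add_comm] using h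

theorem tendsto_zero_of_le_sub_succ {F d : ℕ → ℝ} (hF : ∀ n, 0 ≤ F n)
    (hd : BddBelow (Set.range d)) (h : ∀ n, F n ≤ d n - d (n + 1)) :
    Tendsto F atTop (nhds 0) := by
  have hanti : Antitone d := antitone_nat_of_succ_le fun n => by linarith [h n, hF n]
  have hlim := tendsto_atTop_ciInf hanti hd
  have hdiff : Tendsto (fun n => d n - d (n + 1)) atTop (nhds 0) := by
    simpa using hlim.sub (hlim.comp (tendsto_add_atTop_nat 1))
  exact squeeze_zero hF h hdiff

section Bregman

variable {ι : Type*} [Fintype ι]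

/-- The Bregman divergence of `x ↦ ∑ i, (x i * log (x i) - x i)` (generalized Kullback–Leibler
divergence). -/
noncomputable def bregmanDiv (x y : ι → ℝ) : ℝ :=
  ∑ i, (x i * log (x i / y i) - (x i - y i))

lemma bregmanDiv_eq_sub (x y : ι → ℝ) :
    bregmanDiv x y = ∑ i, x i * log (x i / y i) - (∑ i, x i - ∑ i, y i) := by
  simp only [bregmanDiv, sum_sub_distrib]

lemma bregmanDiv_nonneg {x y : ι → ℝ} (hx : ∀ i, 0 ≤ x i) (hy : ∀ i, 0 < y i) :
    0 ≤ bregmanDiv x y :=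
  sum_nonneg fun i _ => mul_log_div_sub_sub_nonneg (hx i) (hy i)

end Bregman

section GIS

open Matrix

variable {ι κ : Type*} [Fintype ι]

lemma mulVec_pos_of_mulVec_pos {A : Matrix κ ι ℝ} {q δ : ι → ℝ} (hA : ∀ j i, 0 ≤ A j i)
    (hq : ∀ i, 0 < q i) {j : κ} (hδ : 0 < (A *ᵥ δ) j) : 0 < (A *ᵥ q) j := by
  obtain ⟨i, -, hi⟩ := exists_ne_zero_of_sum_ne_zero hδ.ne'
  have hAji : 0 < A j i := (hA j i).lt_of_ne' (left_ne_zero_of_mul hi)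
  exact sum_pos' (fun i _ => mul_nonneg (hA j i) (hq i).le) ⟨i, mem_univ i, mul_pos hAji (hq i)⟩

variable [Fintype κ]

noncomputable def gisStep (A : Matrix κ ι ℝ) (q δ : ι → ℝ) : ι → ℝ :=
  fun i => δ i * ∏ j, ((A *ᵥ q) j / (A *ᵥ δ) j) ^ A j i

variable {A : Matrix κ ι ℝ} {q δ : ι → ℝ}

lemma gisStep_pos (hδ : ∀ i, 0 < δ i) (hs : ∀ j, 0 < (A *ᵥ q) j) (ht : ∀ j, 0 < (A *ᵥ δ) j)
    (i : ι) : 0 < gisStep A q δ i :=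
  mul_pos (hδ i) (prod_pos fun j _ => rpow_pos_of_pos (div_pos (hs j) (ht j)) _)

lemma log_gisStep (hδ : ∀ i, 0 < δ i) (hs : ∀ j, 0 < (A *ᵥ q) j) (ht : ∀ j, 0 < (A *ᵥ δ) j)
    (i : ι) :
    log (gisStep A q δ i) = log (δ i) + ∑ j, A j i * log ((A *ᵥ q) j / (A *ᵥ δ) j) := by
  have hr j : 0 < (A *ᵥ q) j / (A *ᵥ δ) j := div_pos (hs j) (ht j)
  rw [gisStep, log_mul (hδ i).ne' (prod_pos fun j _ => rpow_pos_of_pos (hr j) _).ne',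
    log_prod fun j _ => (rpow_pos_of_pos (hr j) _).ne']
  simp only [log_rpow (hr _)]

lemma sum_mul_log_div_sub_sum_mul_log_div_gisStep (hq : ∀ i, 0 < q i) (hδ : ∀ i, 0 < δ i)
    (hs : ∀ j, 0 < (A *ᵥ q) j) (ht : ∀ j, 0 < (A *ᵥ δ) j) :
    ∑ i, q i * log (q i / δ i) - ∑ i, q i * log (q i / gisStep A q δ i)
      = ∑ j, (A *ᵥ q) j * log ((A *ᵥ q) j / (A *ᵥ δ) j) := by
  have hterm i : q i * log (q i / δ i) - q i * log (q i / gisStep A q δ i)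
      = ∑ j, A j i * q i * log ((A *ᵥ q) j / (A *ᵥ δ) j) := by
    rw [log_div (hq i).ne' (hδ i).ne', log_div (hq i).ne' (gisStep_pos hδ hs ht i).ne',
      log_gisStep hδ hs ht]
    simp only [mul_right_comm _ (q i), ← sum_mul]
    ring
  simp only [← sum_sub_distrib, hterm]
  rw [sum_comm]
  simp only [← sum_mul]
  rfl

lemma sum_gisStep_le (hA : ∀ j i, 0 ≤ A j i) (hcol : ∀ i, ∑ j, A j i ≤ 1) (hδ : ∀ i, 0 < δ i)
    (hs : ∀ j, 0 ≤ (A *ᵥ q) j) (ht : ∀ j, 0 < (A *ᵥ δ) j) :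
    ∑ i, gisStep A q δ i ≤ ∑ j, (A *ᵥ q) j + (∑ i, δ i - ∑ j, (A *ᵥ δ) j) := by
  have hamgm i : gisStep A q δ i
      ≤ δ i * (∑ j, A j i * ((A *ᵥ q) j / (A *ᵥ δ) j) + (1 - ∑ j, A j i)) :=
    mul_le_mul_of_nonneg_left (geom_mean_le_arith_mean_weighted_of_sum_le_one _ _
      (hA · i) (hcol i) fun j => div_nonneg (hs j) (ht j).le) (hδ i).le
  have hq_eq : ∑ i, δ i * ∑ j, A j i * ((A *ᵥ q) j / (A *ᵥ δ) j) = ∑ j, (A *ᵥ q) j := by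
    simp only [mul_sum]
    rw [sum_comm]
    refine sum_congr rfl fun j _ => ?_
    calc ∑ i, δ i * (A j i * ((A *ᵥ q) j / (A *ᵥ δ) j))
        = (∑ i, A j i * δ i) * ((A *ᵥ q) j / (A *ᵥ δ) j) := by
          rw [sum_mul]
          exact sum_congr rfl fun i _ => by ring
      _ = (A *ᵥ q) j := mul_div_cancel₀ _ (ht j).ne'
  have hδ_eq : ∑ i, δ i * ∑ j, A j i = ∑ j, (A *ᵥ δ) j := by
    simp only [mul_sum]
    rw [sum_comm]
    exact sum_congr rfl fun j _ => sum_congr rfl fun i _ => mul_comm _ _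
  calc ∑ i, gisStep A q δ i
      ≤ ∑ i, δ i * (∑ j, A j i * ((A *ᵥ q) j / (A *ᵥ δ) j) + (1 - ∑ j, A j i)) :=
        sum_le_sum fun i _ => hamgm i
    _ = ∑ j, (A *ᵥ q) j + (∑ i, δ i - ∑ j, (A *ᵥ δ) j) := by
        simp only [mul_add, mul_one_sub, sum_add_distrib, sum_sub_distrib, hq_eq, hδ_eq]

lemma bregmanDiv_mulVec_le_sub_gisStep (hA : ∀ j i, 0 ≤ A j i) (hcol : ∀ i, ∑ j, A j i ≤ 1)
    (hq : ∀ i, 0 < q i) (hδ : ∀ i, 0 < δ i) (ht : ∀ j, 0 < (A *ᵥ δ) j) :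
    bregmanDiv (A *ᵥ q) (A *ᵥ δ) ≤ bregmanDiv q δ - bregmanDiv q (gisStep A q δ) := by
  have hs j : 0 < (A *ᵥ q) j := mulVec_pos_of_mulVec_pos hA hq (ht j)
  have hlog := sum_mul_log_div_sub_sum_mul_log_div_gisStep hq hδ hs ht
  have hsum := sum_gisStep_le hA hcol hδ (fun j => (hs j).le) ht
  simp only [bregmanDiv_eq_sub]
  linarith

end GIS

/-- Along the GIS(1) sequence, the Bregman divergence between the sufficient
statistics, `D(Aq, Aδ⁽ⁿ⁾)`, converges to `0`. -/
theorem gis_bregman_suff_stat_tendsto_zero (J I : ℕ) (A : Fin J → Fin I → ℝ)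
    (hA : ∀ j i, 0 ≤ A j i) (hcol : ∀ i, (∑ j, A j i) ≤ 1)
    (q : Fin I → ℝ) (hq : ∀ i, 0 < q i)
    (δ : ℕ → Fin I → ℝ) (hδ0 : ∀ i, δ 0 i = 1)
    (hpos : ∀ n j, 0 < ∑ i, A j i * δ n i)
    (hrec : ∀ n i, δ (n + 1) i =
      δ n i * ∏ j, ((∑ i', A j i' * q i') / (∑ i', A j i' * δ n i')) ^ (A j i)) :
    Tendsto (fun n =>
      (∑ j, (∑ i, A j i * q i) *
          Real.log ((∑ i, A j i * q i) / (∑ i, A j i * δ n i)))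
        - ((∑ j, ∑ i, A j i * q i) - (∑ j, ∑ i, A j i * δ n i)))
      atTop (nhds 0) := by
  have hstep n : δ (n + 1) = gisStep A q (δ n) := funext (hrec n)
  have hδ n i : 0 < δ n i := by
    induction n generalizing i with
    | zero => simp [hδ0]
    | succ n ih =>
      rw [hstep]
      exact gisStep_pos ih (fun j => mulVec_pos_of_mulVec_pos hA hq (hpos n j)) (hpos n) i
  have hdescent n : bregmanDiv (Matrix.mulVec A q) (Matrix.mulVec A (δ n))
      ≤ bregmanDiv q (δ n) - bregmanDiv q (δ (n + 1)) :=
    hstep n ▸ bregmanDiv_mulVec_le_sub_gisStep hA hcol hq (hδ n) (hpos n)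
  refine (tendsto_zero_of_le_sub_succ
    (fun n => bregmanDiv_nonneg (fun j => (mulVec_pos_of_mulVec_pos hA hq (hpos n j)).le) (hpos n))
    ⟨0, Set.forall_mem_range.2 fun n => bregmanDiv_nonneg (fun i => (hq i).le) (hδ n)⟩
    hdescent).congr fun n => ?_
  rw [bregmanDiv_eq_sub]
  rfl
end
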